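/- If A is in ARI_{al*al} (alternal, swap alternal up to a constant mould, even in depth 1), then A is invariant under both neg and push. -/

import Mathlib

open List

variable {K : Type*} [Field K] [CharZero K]

/-- The multiset (as a list, with multiplicity) of shuffles of two words. -/
def shuffles {α : Type*} : List α → List α → List (List α)
  | [], v => [v]
  | u, [] => [u]
  | x :: u, y :: v =>
      ((shuffles u (y :: v)).map (x :: ·)) ++ ((shuffles (x :: u) v).map (y :: ·))
  termination_by u v => u.length + v.length

/-- A mould (at the level of evaluations) is alternal if all its shuffle sums over
pairs of nonempty words vanish. -/
def Alternal (A : List K → K) : Prop :=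
  ∀ u v : List K, u ≠ [] → v ≠ [] → ((shuffles u v).map A).sum = 0

/-- mould multiplication `mu`. -/
def mu (A B : List K → K) : List K → K :=
  fun w => ∑ k ∈ Finset.range (w.length + 1), A (w.take k) * B (w.drop k)

/-- `lu(A,B) = mu(A,B) - mu(B,A)`. -/
def lu (A B : List K → K) : List K → K :=
  fun w => mu A B w - mu B A w

/-- All decompositions of a word into two consecutive subwords. -/
def splits2 {α : Type*} (w : List α) : List (List α × List α) :=
  (List.range (w.length + 1)).map fun k => (w.take k, w.drop k)

/-- All decompositions of a word into three consecutive subwords. -/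
def splits3 {α : Type*} (w : List α) : List (List α × List α × List α) :=
  (splits2 w).flatMap fun p => (splits2 p.2).map fun q => (p.1, q.1, q.2)

/-- Add `s` to the first letter of a word. -/
def addFirst (s : K) : List K → List K
  | [] => []
  | x :: xs => (x + s) :: xs

/-- Add `s` to the last letter of a word. -/
def addLast (s : K) : List K → List K
  | [] => []
  | [x] => [x + s]
  | x :: xs => x :: addLast s xs

/-- `amit` for u-moulds: `(amit(B)·A)(w) = Σ_{w=abc, b,c≠∅} A(a⌈c) B(b)`. -/
def amitU (B A : List K → K) : List K → K := fun w =>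
  ((splits3 w).map fun p =>
    match p with
    | (_, [], _) => 0
    | (_, _, []) => 0
    | (a, b, c) => A (a ++ addFirst b.sum c) * B b).sum

/-- `anit` for u-moulds: `(anit(B)·A)(w) = Σ_{w=abc, a,b≠∅} A(a⌉c) B(b)`. -/
def anitU (B A : List K → K) : List K → K := fun w =>
  ((splits3 w).map fun p =>
    match p with
    | ([], _, _) => 0
    | (_, [], _) => 0
    | (a, b, c) => A (addLast b.sum a ++ c) * B b).sum

/-- `arit(B)·A = amit(B)·A - anit(B)·A` on u-moulds. -/
def aritU (B A : List K → K) : List K → K :=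
  fun w => amitU B A w - anitU B A w

/-- the ari bracket on u-moulds. -/
def ariU (A B : List K → K) : List K → K :=
  fun w => aritU B A w + lu A B w - aritU A B w

/-- `amit` for v-moulds. -/
def amitV (B A : List K → K) : List K → K := fun w =>
  ((splits3 w).map fun p =>
    match p with
    | (_, [], _) => 0
    | (_, _, []) => 0
    | (a, b, c0 :: c') => A (a ++ c0 :: c') * B (b.map (fun x => x - c0))).sum

/-- `anit` for v-moulds. -/
def anitV (B A : List K → K) : List K → K := fun w =>
  ((splits3 w).map fun p =>
    match p with
    | ([], _, _) => 0
    | (_, [], _) => 0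
    | (a, b, c) => A (a ++ c) * B (b.map (fun x => x - a.getLastD 0))).sum

/-- `arit(B)·A = amit(B)·A - anit(B)·A` on v-moulds. -/
def aritV (B A : List K → K) : List K → K :=
  fun w => amitV B A w - anitV B A w

/-- the ari bracket on v-moulds. -/
def ariV (A B : List K → K) : List K → K :=
  fun w => aritV B A w + lu A B w - aritV A B w

/-- `neg(A)(u_1,...,u_r) = A(-u_1,...,-u_r)`. -/
def negM (A : List K → K) : List K → K := fun w => A (w.map fun x => -x)

/-- `push(A)(u_1,...,u_r) = A(-u_1-⋯-u_r, u_1, ..., u_{r-1})`. -/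
def pushM (A : List K → K) : List K → K := fun w =>
  match w with
  | [] => A []
  | _ :: _ => A ((-w.sum) :: w.dropLast)

/-- `mantar(A)(u_1,...,u_r) = (-1)^{r-1} A(u_r,...,u_1)`. -/
def mantarM (A : List K → K) : List K → K :=
  fun w => (-1 : K) ^ (w.length + 1) * A w.reverse

/-- argument list for swap from u-moulds to v-moulds:
`(v_1,...,v_r) ↦ (v_r, v_{r-1}-v_r, ..., v_1-v_2)`. -/
def swapUargs (w : List K) : List K :=
  List.zipWith (· - ·) w.reverse (0 :: w.reverse)

/-- argument list for swap from v-moulds to u-moulds: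
`(u_1,...,u_r) ↦ (u_1+⋯+u_r, u_1+⋯+u_{r-1}, ..., u_1)`. -/
def swapVargs (w : List K) : List K :=
  (List.range w.length).map fun i => (w.take (w.length - i)).sum

/-- swap, sending a u-mould to a v-mould. -/
def swapUV (A : List K → K) : List K → K := fun w => A (swapUargs w)

/-- swap, sending a v-mould to a u-mould. -/
def swapVU (A : List K → K) : List K → K := fun w => A (swapVargs w)

/-- A constant-valued mould: its value depends only on the depth. -/
def IsConstantMould (C : List K → K) : Prop :=
  ∀ w w' : List K, w.length = w'.length → C w = C w'

/-!
Write `B = swapUV A + C`. Alternality of a mould `M` gives `M(w.reverse) = (-1)^(r+1) M(w)`.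
Under swap, reversal of v-words becomes `neg ∘ push` of u-words, so this identity for `B`,
compared with the same identity for `A`, gives `A ∘ (neg ∘ push) = A + ((-1)^(r+1) - 1) C_r`;
at the zero word the left side is `A`, which kills the constant term. Hence `A` is
`neg ∘ push`-invariant and `B` is invariant under the conjugate map `negPushArgsV`.
The single-letter shuffle relations of `v₁` into `(v₂, …, v_r)` and of `v₂ - v₁` into the
image of that word under `negPushArgsV` then agree term by term except for `B v` and `B (-v)`,
so `B`, hence `A`, is neg-invariant in depth `≥ 2`. Finally `push = neg ∘ (neg ∘ push)`.
-/

section Shuffles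

variable {α : Type*}

@[simp] lemma shuffles_nil_left (v : List α) : shuffles [] v = [v] := by simp [shuffles]

@[simp] lemma shuffles_nil_right (u : List α) : shuffles u [] = [u] := by
  cases u <;> simp [shuffles]

lemma shuffles_cons_cons (x y : α) (u v : List α) :
    shuffles (x :: u) (y :: v) =
      (shuffles u (y :: v)).map (x :: ·) ++ (shuffles (x :: u) v).map (y :: ·) := by
  simp [shuffles]

lemma insertIdx_append_of_le_length (l m : List α) (x : α) {i : ℕ} (hi : i ≤ l.length) :
    (l ++ m).insertIdx i x = l.insertIdx i x ++ m := by
  induction l generalizing i with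
  | nil => simp_all
  | cons y l ih =>
    cases i with
    | zero => simp
    | succ i => simp [List.insertIdx_succ_cons, ih (by simpa using hi)]

lemma shuffles_singleton_left (x : α) (l : List α) :
    shuffles [x] l = (List.range (l.length + 1)).map (l.insertIdx · x) := by
  induction l with
  | nil => simp
  | cons y l ih =>
    rw [shuffles_cons_cons, shuffles_nil_left, ih, List.length_cons,
      List.range_succ_eq_map (n := l.length + 1)]
    simp only [List.map_cons, List.map_map, List.insertIdx_zero]
    rfl

end Shuffles

namespace Alternal

variable {F : Type*} [Field F] {B : List F → F}

lemma sum_shuffles_singleton_left (hB : Alternal B) (x : F) {l : List F} (hl : l ≠ []) :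
    ((List.range (l.length + 1)).map fun i => B (l.insertIdx i x)).sum = 0 := by
  simpa [shuffles_singleton_left, List.map_map, Function.comp_def] using hB [x] l (by simp) hl

lemma sum_shuffles_map_cons (hB : Alternal B) (x : F) (p s : List F) :
    ((shuffles p s).map fun u => B (x :: u)).sum = (-1) ^ s.length * B (s.reverse ++ x :: p) := by
  induction s generalizing x p with
  | nil => simp
  | cons y s ih =>
    have h := hB (x :: p) (y :: s) (by simp) (by simp)
    rw [shuffles_cons_cons, List.map_append, List.sum_append, List.map_map, List.map_map] at h
    have hy := ih y (x :: p)
    simp only [Function.comp_def] at h hy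
    rw [List.length_cons, List.reverse_cons, List.append_assoc, List.singleton_append, pow_succ]
    linear_combination h - hy

lemma apply_reverse (hB : Alternal B) {w : List F} (hw : w ≠ []) :
    B w.reverse = (-1) ^ (w.length + 1) * B w := by
  obtain ⟨x, s, rfl⟩ := List.exists_cons_of_ne_nil hw
  have h := hB.sum_shuffles_map_cons x [] s
  simp only [shuffles_nil_left, List.map_cons, List.map_nil, List.sum_cons, List.sum_nil,
    add_zero] at h
  have hsq : ((-1 : F) ^ s.length) ^ 2 = 1 := by rw [← pow_mul, pow_mul', neg_one_sq, one_pow]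
  rw [List.reverse_cons, h, List.length_cons]
  linear_combination (-B (s.reverse ++ [x])) * hsq

end Alternal

section Differences

variable {G : Type*} [AddCommGroup G]

def diffsFrom (c : G) : List G → List G
  | [] => []
  | a :: t => (a - c) :: diffsFrom a t

@[simp] lemma diffsFrom_nil (c : G) : diffsFrom c [] = [] := rfl

@[simp] lemma diffsFrom_cons (c a : G) (t : List G) :
    diffsFrom c (a :: t) = (a - c) :: diffsFrom a t := rfl

@[simp] lemma length_diffsFrom (c : G) (l : List G) : (diffsFrom c l).length = l.length := by
  induction l generalizing c <;> simp [*]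

lemma zipWith_sub_cons_eq_diffsFrom (c : G) (l : List G) :
    List.zipWith (· - ·) l (c :: l) = diffsFrom c l := by
  induction l generalizing c <;> simp [*]

lemma diffsFrom_concat (c x : G) (l : List G) :
    diffsFrom c (l ++ [x]) = diffsFrom c l ++ [x - l.getLastD c] := by
  induction l generalizing c <;> simp [*, List.getLast?_cons]

lemma sum_diffsFrom (c : G) (l : List G) : (diffsFrom c l).sum = l.getLastD c - c := by
  induction l generalizing c with
  | nil => simp
  | cons a t ih => simp [ih, List.getLast?_cons]

lemma diffsFrom_map_sub (x c : G) (l : List G) :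
    diffsFrom (x - c) (l.map (x - ·)) = (diffsFrom c l).map (-·) := by
  induction l generalizing c <;> simp [*]

lemma reverse_diffsFrom_reverse (c x : G) (t : List G) :
    (diffsFrom c (x :: t).reverse).reverse = (diffsFrom x t).map (-·) ++ [t.getLastD x - c] := by
  induction t generalizing x with
  | nil => simp
  | cons y s ih =>
    rw [List.reverse_cons, diffsFrom_concat, List.reverse_append, ih]
    simp [List.getLast?_cons]

lemma exists_diffsFrom_eq (c : G) (w : List G) :
    ∃ l : List G, l.length = w.length ∧ diffsFrom c l = w := by
  induction w generalizing c with
  | nil => exact ⟨[], rfl, rfl⟩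
  | cons x w ih =>
    obtain ⟨l, hlen, hl⟩ := ih (c + x)
    exact ⟨(c + x) :: l, by simp [hlen], by simp [hl]⟩

end Differences

section SwapArgs

variable {F : Type*} [Field F]

def negPushArgsU : List F → List F
  | [] => []
  | x :: t => (x :: t).sum :: (x :: t).dropLast.map (-·)

def negPushArgsV : List F → List F
  | [] => []
  | x :: t => t.map (x - ·) ++ [x]

lemma negPushArgsU_of_ne_nil {w : List F} (hw : w ≠ []) :
    negPushArgsU w = w.sum :: w.dropLast.map (-·) := by
  obtain ⟨x, t, rfl⟩ := List.exists_cons_of_ne_nil hw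
  rfl

@[simp] lemma length_negPushArgsV (v : List F) : (negPushArgsV v).length = v.length := by
  cases v <;> simp [negPushArgsV]

lemma negPushArgsU_replicate_zero (n : ℕ) :
    negPushArgsU (List.replicate n (0 : F)) = List.replicate n 0 := by
  cases n with
  | zero => rfl
  | succ n =>
    simp [negPushArgsU_of_ne_nil, List.replicate_succ]

lemma negM_pushM_apply (A : List F → F) (w : List F) :
    negM (pushM A) w = A (negPushArgsU w) := by
  cases w with
  | nil => rfl
  | cons x t => simp [negM, pushM, negPushArgsU, List.map_dropLast, ← List.sum_neg, add_comm]

lemma swapUargs_eq_diffsFrom (w : List F) : swapUargs w = diffsFrom 0 w.reverse :=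
  zipWith_sub_cons_eq_diffsFrom 0 w.reverse

lemma exists_swapUargs_eq (w : List F) :
    ∃ v : List F, v.length = w.length ∧ swapUargs v = w := by
  obtain ⟨l, hlen, hl⟩ := exists_diffsFrom_eq 0 w
  exact ⟨l.reverse, by simpa using hlen, by simpa [swapUargs_eq_diffsFrom] using hl⟩

lemma swapUargs_map_neg (v : List F) :
    swapUargs (v.map (-·)) = (swapUargs v).map (-·) := by
  simpa [swapUargs_eq_diffsFrom, List.map_reverse] using diffsFrom_map_sub 0 0 v.reverse

lemma swapUargs_reverse (v : List F) :
    swapUargs v.reverse = negPushArgsU (swapUargs v).reverse := by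
  cases v with
  | nil => rfl
  | cons x t =>
    rw [swapUargs_eq_diffsFrom, swapUargs_eq_diffsFrom,
      negPushArgsU_of_ne_nil (List.ne_nil_of_length_pos (by simp)), List.sum_reverse,
      sum_diffsFrom, reverse_diffsFrom_reverse, List.dropLast_concat]
    simp

lemma swapUargs_negPushArgsV (v : List F) :
    swapUargs (negPushArgsV v) = negPushArgsU (swapUargs v) := by
  cases v with
  | nil => rfl
  | cons x t =>
    rw [swapUargs_eq_diffsFrom, swapUargs_eq_diffsFrom,
      negPushArgsU_of_ne_nil (List.ne_nil_of_length_pos (by simp))]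
    simpa [negPushArgsV, diffsFrom_concat, sum_diffsFrom, ← List.map_reverse] using
      diffsFrom_map_sub x 0 t.reverse

end SwapArgs

section Invariance

variable {F : Type*} [Field F]

lemma Alternal.apply_map_neg_of_negPushArgsV_invariant {B : List F → F} (hB : Alternal B)
    (hinv : ∀ v, B (negPushArgsV v) = B v) {v : List F} (hv : 2 ≤ v.length) :
    B (v.map (-·)) = B v := by
  obtain ⟨v₁, v₂, t, rfl⟩ : ∃ v₁ v₂ t, v = v₁ :: v₂ :: t := by
    match v, hv with
    | v₁ :: v₂ :: t, _ => exact ⟨v₁, v₂, t, rfl⟩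
  set w := t.map (v₂ - ·) ++ [v₂] with hw
  have h₁ := hB.sum_shuffles_singleton_left v₁ (l := v₂ :: t) (by simp)
  have h₂ := hB.sum_shuffles_singleton_left (v₂ - v₁) (l := w) (by simp [hw])
  rw [List.length_cons, List.sum_range_succ'] at h₁
  rw [show w.length = t.length + 1 by simp [hw], List.sum_range_succ] at h₂
  have hmid : ∀ i ∈ List.range (t.length + 1),
      B (w.insertIdx i (v₂ - v₁)) = B ((v₂ :: t).insertIdx (i + 1) v₁) := by
    intro i hi
    rw [← hinv ((v₂ :: t).insertIdx (i + 1) v₁), List.insertIdx_succ_cons]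
    simp only [negPushArgsV]
    rw [List.map_insertIdx, hw,
      insertIdx_append_of_le_length _ _ _ (by simpa [Nat.lt_succ_iff] using hi)]
  have hlast : w.insertIdx (t.length + 1) (v₂ - v₁) =
      negPushArgsV (negPushArgsV ((v₁ :: v₂ :: t).map (-·))) := by
    rw [show t.length + 1 = w.length by simp [hw], List.insertIdx_length_self]
    simp [negPushArgsV, hw, Function.comp_def, neg_add_eq_sub]
  rw [List.map_congr_left hmid, hlast, hinv, hinv] at h₂
  simp only [List.insertIdx_zero] at h₁
  linear_combination h₂ - h₁

lemma negM_negM (A : List F → F) : negM (negM A) = A := by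
  funext w
  simp [negM]

variable {A C : List F → F}

lemma apply_negPushArgsU_sub_apply (hal : Alternal A) (hC : IsConstantMould C)
    (hswapal : Alternal (fun w => swapUV A w + C w)) {w : List F} (hw : w ≠ []) :
    A (negPushArgsU w) - A w = ((-1) ^ (w.length + 1) - 1) * C (List.replicate w.length 0) := by
  obtain ⟨v, hvlen, hv⟩ := exists_swapUargs_eq w.reverse
  rw [List.length_reverse] at hvlen
  have hv₀ : v ≠ [] := List.ne_nil_of_length_pos (hvlen ▸ List.length_pos_iff.2 hw)
  have hB := hswapal.apply_reverse hv₀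
  simp only [swapUV, swapUargs_reverse, hv, List.reverse_reverse, hvlen] at hB
  rw [hC v.reverse (List.replicate w.length 0) (by simp [hvlen]),
    hC v (List.replicate w.length 0) (by simp [hvlen]), hal.apply_reverse hw] at hB
  have hsq : ((-1 : F) ^ (w.length + 1)) ^ 2 = 1 := by
    rw [← pow_mul, pow_mul', neg_one_sq, one_pow]
  linear_combination hB + A w * hsq

lemma negM_pushM_eq_self (hal : Alternal A) (hC : IsConstantMould C)
    (hswapal : Alternal (fun w => swapUV A w + C w)) : negM (pushM A) = A := by
  funext w
  rw [negM_pushM_apply]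
  rcases eq_or_ne w [] with rfl | hw
  · rfl
  have hzero := apply_negPushArgsU_sub_apply hal hC hswapal (w := List.replicate w.length 0)
    (by simpa using hw)
  rw [negPushArgsU_replicate_zero, List.length_replicate] at hzero
  linear_combination apply_negPushArgsU_sub_apply hal hC hswapal hw - hzero

lemma negM_eq_self (hal : Alternal A) (hC : IsConstantMould C)
    (hswapal : Alternal (fun w => swapUV A w + C w)) (heven : ∀ x : F, A [-x] = A [x]) :
    negM A = A := by
  have hinv (v : List F) : swapUV A (negPushArgsV v) + C (negPushArgsV v) = swapUV A v + C v := by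
    rw [swapUV, swapUargs_negPushArgsV, ← negM_pushM_apply A, negM_pushM_eq_self hal hC hswapal,
      hC _ v (length_negPushArgsV v)]
    rfl
  funext w
  match w with
  | [] => rfl
  | [x] => exact heven x
  | x :: y :: t =>
    obtain ⟨v, hvlen, hv⟩ := exists_swapUargs_eq (x :: y :: t)
    have hB := hswapal.apply_map_neg_of_negPushArgsV_invariant hinv (v := v)
      (by rw [hvlen]; simp)
    rw [hC (v.map (-·)) v (by simp)] at hB
    simpa [negM, swapUV, swapUargs_map_neg, hv] using hB

end Invariance

theorem alstaral_neg_and_push_invariant_general (A C : List K → K)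
    (hal : Alternal A)
    (hC : IsConstantMould C)
    (hswapal : Alternal (fun w => swapUV A w + C w))
    (heven : ∀ x : K, A [-x] = A [x]) :
    negM A = A ∧ pushM A = A := by
  have hneg := negM_eq_self hal hC hswapal heven
  refine ⟨hneg, ?_⟩
  rw [← negM_negM (pushM A), negM_pushM_eq_self hal hC hswapal, hneg]

/-- a mould in ARI_{al*al} (alternal, swap alternal up to a constant-valued
mould, even in depth 1) is invariant under both `neg` and `push`. -/
theorem alstaral_neg_and_push_invariant (A C : List K → K)
    (hA0 : A [] = 0) (hal : Alternal A)
    (hC : IsConstantMould C)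
    (hswapal : Alternal (fun w => swapUV A w + C w))
    (heven : ∀ x : K, A [-x] = A [x]) :
    negM A = A ∧ pushM A = A :=
  alstaral_neg_and_push_invariant_general A C hal hC hswapal heven
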